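/- arXiv:math/0309149 — 2 statements merged into one kernel-verified Lean document; each statement's English description precedes it below -/
import Mathlib

section
/- The three edges {1,2}, {1,3}, {2,3} are faces of the complex S^3_{17,74}, and together they form a 3-cycle (triangle) in its 1-skeleton, but the set {1,2,3} is not a face of S^3_{17,74}. -/
namespace NonConstructible

def faces (K : Finset (Finset ℕ)) : Finset (Finset ℕ) :=
  (K.biUnion Finset.powerset).erase ∅

def fcount (K : Finset (Finset ℕ)) (k : ℕ) : ℕ :=
  ((faces K).filter (fun s => s.card = k + 1)).card

def bdryTri (K : Finset (Finset ℕ)) : Finset (Finset ℕ) :=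
  (faces K).filter (fun t => t.card = 3 ∧ (K.filter (fun F => t ⊆ F)).card = 1)

def B1646 : Finset (Finset ℕ) :=
  [({1, 2, 6, 9} : Finset ℕ),
   ({1, 2, 6, 12} : Finset ℕ),
   ({1, 2, 9, 12} : Finset ℕ),
   ({1, 3, 5, 8} : Finset ℕ),
   ({1, 3, 5, 11} : Finset ℕ),
   ({1, 3, 8, 11} : Finset ℕ),
   ({2, 3, 4, 7} : Finset ℕ),
   ({2, 3, 4, 10} : Finset ℕ),
   ({2, 3, 7, 10} : Finset ℕ),
   ({1, 4, 6, 12} : Finset ℕ),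
   ({2, 4, 5, 10} : Finset ℕ),
   ({3, 5, 6, 11} : Finset ℕ),
   ({1, 4, 7, 13} : Finset ℕ),
   ({2, 4, 7, 13} : Finset ℕ),
   ({1, 7, 10, 13} : Finset ℕ),
   ({2, 7, 10, 13} : Finset ℕ),
   ({1, 5, 10, 13} : Finset ℕ),
   ({2, 5, 10, 13} : Finset ℕ),
   ({1, 5, 8, 13} : Finset ℕ),
   ({2, 5, 8, 13} : Finset ℕ),
   ({2, 5, 8, 14} : Finset ℕ),
   ({3, 5, 8, 14} : Finset ℕ),
   ({2, 8, 11, 14} : Finset ℕ),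
   ({3, 8, 11, 14} : Finset ℕ),
   ({2, 6, 11, 14} : Finset ℕ),
   ({3, 6, 11, 14} : Finset ℕ),
   ({2, 6, 9, 14} : Finset ℕ),
   ({3, 6, 9, 14} : Finset ℕ),
   ({3, 6, 9, 15} : Finset ℕ),
   ({1, 6, 9, 15} : Finset ℕ),
   ({3, 9, 12, 15} : Finset ℕ),
   ({1, 9, 12, 15} : Finset ℕ),
   ({3, 4, 12, 15} : Finset ℕ),
   ({1, 4, 12, 15} : Finset ℕ),
   ({3, 4, 7, 15} : Finset ℕ),
   ({1, 4, 7, 15} : Finset ℕ),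
   ({4, 5, 6, 16} : Finset ℕ),
   ({1, 4, 6, 16} : Finset ℕ),
   ({1, 4, 13, 16} : Finset ℕ),
   ({2, 4, 13, 16} : Finset ℕ),
   ({2, 4, 5, 16} : Finset ℕ),
   ({2, 5, 14, 16} : Finset ℕ),
   ({3, 5, 14, 16} : Finset ℕ),
   ({3, 5, 6, 16} : Finset ℕ),
   ({3, 6, 15, 16} : Finset ℕ),
   ({1, 6, 15, 16} : Finset ℕ)].toFinset

def S1774 : Finset (Finset ℕ) :=
  B1646 ∪ (bdryTri B1646).image (insert 17)

set_option maxRecDepth 8000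
set_option linter.constructorNameAsVariable false

theorem knotted_triangle_in_S1774 :
    ({1, 2} : Finset ℕ) ∈ faces S1774 ∧
    ({1, 3} : Finset ℕ) ∈ faces S1774 ∧
    ({2, 3} : Finset ℕ) ∈ faces S1774 ∧
    ({1, 2, 3} : Finset ℕ) ∉ faces S1774 := by
  have hB : ∀ F ∈ B1646, ¬ ({1, 2, 3} : Finset ℕ) ⊆ F := by decide
  refine ⟨?_, ?_, ?_, ?_⟩
  · simp only [faces, S1774, Finset.mem_erase, Finset.mem_biUnion, Finset.mem_union,
      Finset.mem_powerset]
    exact ⟨by decide, {1,2,6,9}, Or.inl (by decide), by decide⟩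
  · simp only [faces, S1774, Finset.mem_erase, Finset.mem_biUnion, Finset.mem_union,
      Finset.mem_powerset]
    exact ⟨by decide, {1,3,5,8}, Or.inl (by decide), by decide⟩
  · simp only [faces, S1774, Finset.mem_erase, Finset.mem_biUnion, Finset.mem_union,
      Finset.mem_powerset]
    exact ⟨by decide, {2,3,4,7}, Or.inl (by decide), by decide⟩
  · intro h
    simp only [faces, S1774, Finset.mem_erase, Finset.mem_biUnion, Finset.mem_union,
      Finset.mem_powerset, Finset.mem_image, bdryTri, Finset.mem_filter] at h
    obtain ⟨-, F, hF, hsub⟩ := h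
    rcases hF with hF | ⟨t, ⟨⟨-, G, hG, htG⟩, -⟩, rfl⟩
    · exact hB F hF hsub
    · have h123 : ({1, 2, 3} : Finset ℕ) ⊆ t := by
        intro x hx
        have hxF := hsub hx
        rcases Finset.mem_insert.1 hxF with h17 | hxt
        · subst h17; exact absurd hx (by decide)
        · exact hxt
      exact hB G hG (h123.trans htG)

end NonConstructible
end

section
/- The complexes B^3_{12,37,a} and B^3_{12,37,b}, obtained from B^3_{12,38} by removing the facet {2,4,5,7} and {3,4,6,10} respectively, are not isomorphic as simplicial complexes. -/
set_option maxRecDepth 100000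


namespace NonConstructible

def B1238 : Finset (Finset ℕ) :=
  [({1, 2, 6, 9} : Finset ℕ),
   ({1, 2, 6, 12} : Finset ℕ),
   ({1, 2, 9, 12} : Finset ℕ),
   ({1, 3, 5, 8} : Finset ℕ),
   ({1, 3, 5, 11} : Finset ℕ),
   ({1, 3, 8, 11} : Finset ℕ),
   ({2, 3, 4, 7} : Finset ℕ),
   ({2, 3, 4, 10} : Finset ℕ),
   ({2, 3, 7, 10} : Finset ℕ),
   ({1, 5, 8, 10} : Finset ℕ),
   ({1, 5, 10, 11} : Finset ℕ),
   ({1, 6, 7, 9} : Finset ℕ),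
   ({1, 6, 7, 12} : Finset ℕ),
   ({1, 7, 8, 10} : Finset ℕ),
   ({1, 7, 8, 11} : Finset ℕ),
   ({1, 7, 10, 12} : Finset ℕ),
   ({1, 9, 10, 12} : Finset ℕ),
   ({2, 4, 5, 7} : Finset ℕ),
   ({2, 4, 5, 10} : Finset ℕ),
   ({2, 5, 8, 10} : Finset ℕ),
   ({2, 6, 9, 11} : Finset ℕ),
   ({2, 7, 8, 10} : Finset ℕ),
   ({2, 7, 8, 11} : Finset ℕ),
   ({2, 8, 9, 11} : Finset ℕ),
   ({2, 8, 9, 12} : Finset ℕ),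
   ({3, 4, 6, 7} : Finset ℕ),
   ({3, 4, 6, 10} : Finset ℕ),
   ({3, 5, 9, 11} : Finset ℕ),
   ({3, 6, 7, 12} : Finset ℕ),
   ({3, 7, 10, 12} : Finset ℕ),
   ({3, 8, 9, 11} : Finset ℕ),
   ({3, 8, 9, 12} : Finset ℕ),
   ({3, 9, 10, 12} : Finset ℕ),
   ({4, 5, 6, 7} : Finset ℕ),
   ({4, 5, 6, 10} : Finset ℕ),
   ({5, 6, 7, 9} : Finset ℕ),
   ({5, 6, 9, 11} : Finset ℕ),
   ({5, 6, 10, 11} : Finset ℕ)].toFinset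

def verts (K : Finset (Finset ℕ)) : Finset ℕ := K.biUnion id
def deg (K : Finset (Finset ℕ)) (v : ℕ) : ℕ := (K.filter (fun F => v ∈ F)).card

def wt (K : Finset (Finset ℕ)) (v : ℕ) : ℕ :=
  ((K.filter (fun F => v ∈ F)).sum (fun F => F.prod (deg K)))

theorem key (A B : Finset (Finset ℕ)) (σ : ℕ → ℕ)
    (hbij : Set.BijOn σ (verts A) (verts B))
    (himg : A.image (fun F => F.image σ) = B)
    (hcard : A.card = B.card)
    (v : ℕ) (hv : v ∈ verts A) :
    wt B (σ v) = wt A v := by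
  have hsubV : ∀ F ∈ A, ∀ u ∈ F, u ∈ verts A := by
    intro F hF u hu
    exact Finset.mem_biUnion.2 ⟨F, hF, hu⟩
  have hinjσ : Set.InjOn σ (verts A) := hbij.injOn
  have hΦinj : Set.InjOn (fun F : Finset ℕ => F.image σ) ↑A := by
    apply Finset.injOn_of_card_image_eq
    rw [himg, hcard]
  -- degree preserved
  have hdeg : ∀ u ∈ verts A, deg B (σ u) = deg A u := by
    intro u hu
    have hfilt : B.filter (fun G => σ u ∈ G) =
        (A.filter (fun F => u ∈ F)).image (fun F => F.image σ) := by
      ext G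
      simp only [Finset.mem_filter, Finset.mem_image]
      constructor
      · rintro ⟨hGB, hσuG⟩
        rw [← himg] at hGB
        obtain ⟨F, hFA, rfl⟩ := Finset.mem_image.1 hGB
        refine ⟨F, ⟨hFA, ?_⟩, rfl⟩
        obtain ⟨x, hxF, hx⟩ := Finset.mem_image.1 hσuG
        have := hinjσ (hsubV F hFA x hxF) hu hx
        rwa [← this]
      · rintro ⟨F, ⟨hFA, huF⟩, rfl⟩
        exact ⟨himg ▸ Finset.mem_image_of_mem _ hFA, Finset.mem_image_of_mem _ huF⟩
    unfold deg
    rw [hfilt]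
    exact Finset.card_image_of_injOn (hΦinj.mono (by intro x hx; exact (Finset.mem_filter.1 hx).1))
  -- weight preserved
  have hfilt : B.filter (fun G => σ v ∈ G) =
      (A.filter (fun F => v ∈ F)).image (fun F => F.image σ) := by
    ext G
    simp only [Finset.mem_filter, Finset.mem_image]
    constructor
    · rintro ⟨hGB, hσuG⟩
      rw [← himg] at hGB
      obtain ⟨F, hFA, rfl⟩ := Finset.mem_image.1 hGB
      refine ⟨F, ⟨hFA, ?_⟩, rfl⟩
      obtain ⟨x, hxF, hx⟩ := Finset.mem_image.1 hσuG
      have := hinjσ (hsubV F hFA x hxF) hv hx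
      rwa [← this]
    · rintro ⟨F, ⟨hFA, huF⟩, rfl⟩
      exact ⟨himg ▸ Finset.mem_image_of_mem _ hFA, Finset.mem_image_of_mem _ huF⟩
  unfold wt
  rw [hfilt, Finset.sum_image (by
    intro F hF G hG h
    exact hΦinj (Finset.mem_filter.1 hF).1 (Finset.mem_filter.1 hG).1 h)]
  apply Finset.sum_congr rfl
  intro F hF
  have hFA := (Finset.mem_filter.1 hF).1
  rw [Finset.prod_image (by
    intro x hx y hy h
    exact hinjσ (hsubV F hFA x hx) (hsubV F hFA y hy) h)]
  apply Finset.prod_congr rfl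
  intro u hu
  exact hdeg u (hsubV F hFA u hu)



theorem B1237a_not_isomorphic_B1237b :
    ¬ ∃ σ : ℕ → ℕ,
      Set.BijOn σ (verts (B1238.erase {2, 4, 5, 7}))
        (verts (B1238.erase {3, 4, 6, 10})) ∧
      (B1238.erase {2, 4, 5, 7}).image (fun F => F.image σ) =
        B1238.erase {3, 4, 6, 10} := by
  rintro ⟨σ, hbij, himg⟩
  have hcard : (B1238.erase {2, 4, 5, 7}).card = (B1238.erase {3, 4, 6, 10}).card := by decide
  have hv : (12 : ℕ) ∈ verts (B1238.erase {2, 4, 5, 7}) := by decide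
  have h12 : wt (B1238.erase {2, 4, 5, 7}) 12 = 253800 := by decide
  have hkey := key _ _ σ hbij himg hcard 12 hv
  have hmem : σ 12 ∈ verts (B1238.erase {3, 4, 6, 10}) := hbij.mapsTo hv
  have hall : ∀ w ∈ verts (B1238.erase {3, 4, 6, 10}),
      wt (B1238.erase {3, 4, 6, 10}) w ≠ 253800 := by decide
  exact hall _ hmem (hkey.trans h12)

end NonConstructible
end
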